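/- arXiv:2010.09973 — 2 statements merged into one kernel-verified Lean document; each statement's English description precedes it below -/
import Mathlib

section
/- For every odd positive integer p, the Turán number ex(p+2, B_p) equals (p+1)^2/2. -/
/-!
On `n` vertices an edge `xy` spans a book `B_{n-2}` exactly when `x` and `y` are both universal,
since otherwise a non-neighbour of `x` or of `y` is lost from the pages. So a `B_{n-2}`-free graph
has at most one vertex of degree `n - 1` and all others of degree at most `n - 2`; summing degrees,
`2 e ≤ n (n - 2) + 1 = (p + 1)^2` for `n = p + 2`. For odd `p` the bound is attained by the
complement of a matching covering all vertices but one.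
-/

open SimpleGraph

/-- A graph contains the book `B_p` iff some edge has at least `p` common neighbors. -/
def SimpleGraph.ContainsBook {V : Type*} (G : SimpleGraph V) (p : ℕ) : Prop :=
  ∃ x y, G.Adj x y ∧ p ≤ (G.commonNeighbors x y).ncard

/-- The Turán number `ex(n, B_p)`: the maximum number of edges of a simple graph
on `n` vertices containing no book `B_p`. -/
noncomputable def bookTuranNumber (n p : ℕ) : ℕ :=
  sSup {e : ℕ | ∃ G : SimpleGraph (Fin n), ¬ G.ContainsBook p ∧ G.edgeSet.ncard = e}

/-- The disjoint union of `m` copies of the complete graph `K_k`. -/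
def unionComplete (m k : ℕ) : SimpleGraph (Fin m × Fin k) :=
  SimpleGraph.fromRel fun a b => a.1 = b.1

/-- The join `G ∨ H` of two graphs. -/
def SimpleGraph.join {α β : Type*} (G : SimpleGraph α) (H : SimpleGraph β) :
    SimpleGraph (α ⊕ β) := (Gᶜ ⊕g Hᶜ)ᶜ

/-- A disjoint union of cycles `C_{i 0} + ⋯ + C_{i (t-1)}`. -/
def cycleFamily (t : ℕ) (i : Fin t → ℕ) : SimpleGraph (Σ j : Fin t, Fin (i j)) :=
  SimpleGraph.fromRel fun a b => ∃ h : a.1 = b.1, (SimpleGraph.cycleGraph (i b.1)).Adj (h ▸ a.2) b.2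

open Finset

lemma bookTuranNumber_eq_of_le {n p b : ℕ}
    (hupper : ∀ (G : SimpleGraph (Fin n)) [DecidableRel G.Adj], ¬ G.ContainsBook p →
      #G.edgeFinset ≤ b)
    (G₀ : SimpleGraph (Fin n)) [DecidableRel G₀.Adj] (hG₀ : ¬ G₀.ContainsBook p)
    (hb : b ≤ #G₀.edgeFinset) :
    bookTuranNumber n p = b := by
  classical
  let S := {e | ∃ G : SimpleGraph (Fin n), ¬ G.ContainsBook p ∧ G.edgeSet.ncard = e}
  have hbound : ∀ e ∈ S, e ≤ b := by
    rintro _ ⟨G, hG, rfl⟩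
    rw [← coe_edgeFinset, Set.ncard_coe_finset]
    exact hupper G hG
  have hmem : #G₀.edgeFinset ∈ S :=
    ⟨G₀, hG₀, by rw [← coe_edgeFinset, Set.ncard_coe_finset]⟩
  exact le_antisymm (csSup_le ⟨_, hmem⟩ hbound) (hb.trans (le_csSup ⟨_, hbound⟩ hmem))

namespace SimpleGraph

variable {V : Type*} (G : SimpleGraph V)

lemma commonNeighbors_eq_compl_pair {x y : V} (hx : G.IsUniversal x) (hy : G.IsUniversal y) :
    G.commonNeighbors x y = {x, y}ᶜ := by
  ext z
  simp only [mem_commonNeighbors, Set.mem_compl_iff, Set.mem_insert_iff, Set.mem_singleton_iff,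
    not_or]
  exact ⟨fun h => ⟨h.1.ne', h.2.ne'⟩, fun h => ⟨hx (Ne.symm h.1), hy (Ne.symm h.2)⟩⟩

variable [Fintype V]

lemma ncard_commonNeighbors_add_three_le {x y w : V} (hxy : G.Adj x y) (hxw : x ≠ w)
    (hw : ¬ G.Adj x w) : (G.commonNeighbors x y).ncard + 3 ≤ Fintype.card V := by
  have hsub : G.commonNeighbors x y ⊆ {x, y, w}ᶜ := by
    intro z hz
    rw [mem_commonNeighbors] at hz
    simp only [Set.mem_compl_iff, Set.mem_insert_iff, Set.mem_singleton_iff, not_or]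
    exact ⟨hz.1.ne', hz.2.ne', by rintro rfl; exact hw hz.1⟩
  have hyw : y ≠ w := by rintro rfl; exact hw hxy
  have h3 : ({x, y, w} : Set V).ncard = 3 := by
    rw [Set.ncard_insert_of_notMem (by simp [hxy.ne, hxw]), Set.ncard_pair hyw]
  have := Set.ncard_le_ncard hsub
  have := Set.ncard_add_ncard_compl ({x, y, w} : Set V)
  rw [Nat.card_eq_fintype_card] at this
  omega

theorem containsBook_card_sub_two_iff :
    G.ContainsBook (Fintype.card V - 2) ↔ G.universalVerts.Nontrivial := by
  constructor
  · rintro ⟨x, y, hxy, hbook⟩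
    have huniv : ∀ {a b}, G.Adj a b → Fintype.card V - 2 ≤ (G.commonNeighbors a b).ncard →
        G.IsUniversal a := by
      intro a b hab h w haw
      by_contra hw
      have := G.ncard_commonNeighbors_add_three_le hab haw hw
      omega
    exact ⟨x, huniv hxy hbook, y, huniv hxy.symm (by rwa [commonNeighbors_symm]), hxy.ne⟩
  · rintro ⟨x, hx, y, hy, hxy⟩
    refine ⟨x, y, hx hxy, ?_⟩
    rw [G.commonNeighbors_eq_compl_pair hx hy, Set.ncard_compl, Set.ncard_pair hxy,
      Nat.card_eq_fintype_card]

theorem two_mul_card_edgeFinset_le [DecidableRel G.Adj] (h : G.universalVerts.Subsingleton) :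
    2 * #G.edgeFinset ≤ Fintype.card V * (Fintype.card V - 2) + 1 := by
  classical
  have hdeg : ∀ v, G.degree v ≤ (Fintype.card V - 2) + if G.IsUniversal v then 1 else 0 := by
    intro v
    split_ifs with hv
    · have := G.degree_lt_card_verts v
      omega
    · have := (G.degree_lt_card_sub_one v).2 hv
      omega
  have hcard : #(univ.filter G.IsUniversal) ≤ 1 :=
    Finset.card_le_one.2 fun a ha b hb => h (mem_filter.1 ha).2 (mem_filter.1 hb).2
  calc 2 * #G.edgeFinset = ∑ v, G.degree v := G.sum_degrees_eq_twice_card_edges.symm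
    _ ≤ ∑ v, ((Fintype.card V - 2) + if G.IsUniversal v then 1 else 0) :=
      sum_le_sum fun v _ => hdeg v
    _ = Fintype.card V * (Fintype.card V - 2) + #(univ.filter G.IsUniversal) := by
      rw [sum_add_distrib, sum_boole, sum_const, card_univ, smul_eq_mul, Nat.cast_id]
    _ ≤ _ := by omega

end SimpleGraph

/-- The complete multipartite graph on `Fin n` with parts `{2k, 2k + 1}` (the last part is a
singleton when `n` is odd), i.e. the complement of a maximal matching. -/
def cocktailPartyGraph (n : ℕ) : SimpleGraph (Fin n) :=
  (⊤ : SimpleGraph ℕ).comap fun v => v.val / 2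

lemma cocktailPartyGraph_adj {n : ℕ} {v w : Fin n} :
    (cocktailPartyGraph n).Adj v w ↔ v.val / 2 ≠ w.val / 2 := by
  simp [cocktailPartyGraph]

instance (n : ℕ) : DecidableRel (cocktailPartyGraph n).Adj :=
  inferInstanceAs (DecidableRel ((⊤ : SimpleGraph ℕ).comap _).Adj)

lemma not_isUniversal_cocktailPartyGraph {n : ℕ} {v : Fin (n + 1)} (hv : v ≠ Fin.last n) :
    ¬ (cocktailPartyGraph (n + 1)).IsUniversal v := by
  have hvn : v.val < n := Fin.val_lt_last hv
  intro huniv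
  -- the other vertex `v xor 1` of the part of `v`
  have hpartner :=
    @huniv ⟨2 * (v.val / 2) + 1 - v.val % 2, by omega⟩ (by simp [Fin.ext_iff]; omega)
  exact cocktailPartyGraph_adj.1 hpartner (by dsimp only; omega)

lemma isUniversal_last_cocktailPartyGraph {n : ℕ} (hn : Even n) :
    (cocktailPartyGraph (n + 1)).IsUniversal (Fin.last n) := by
  intro w hw
  have hwn : w.val < n := Fin.val_lt_last hw.symm
  rw [cocktailPartyGraph_adj, Fin.val_last]
  obtain ⟨k, rfl⟩ := hn
  omega

lemma universalVerts_cocktailPartyGraph_subsingleton (n : ℕ) :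
    (cocktailPartyGraph (n + 1)).universalVerts.Subsingleton := by
  have hlast : ∀ z ∈ (cocktailPartyGraph (n + 1)).universalVerts, z = Fin.last n :=
    fun z hz => by_contra fun h => not_isUniversal_cocktailPartyGraph h hz
  intro x hx y hy
  rw [hlast x hx, hlast y hy]

lemma compl_degree_cocktailPartyGraph_le_one {n : ℕ} (v : Fin n) :
    (cocktailPartyGraph n)ᶜ.degree v ≤ 1 := by
  rw [← card_neighborFinset_eq_degree, Finset.card_le_one]
  intro a ha b hb
  simp only [mem_neighborFinset, compl_adj, cocktailPartyGraph_adj, ne_eq, not_not] at ha hb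
  have := Fin.val_ne_of_ne ha.1
  have := Fin.val_ne_of_ne hb.1
  ext
  omega

lemma sq_le_two_mul_card_edgeFinset_cocktailPartyGraph {n : ℕ} (hn : Even n) :
    n ^ 2 ≤ 2 * #(cocktailPartyGraph (n + 1)).edgeFinset := by
  have hdeg : ∀ v, n - 1 ≤ (cocktailPartyGraph (n + 1)).degree v := by
    intro v
    have := compl_degree_cocktailPartyGraph_le_one v
    rw [degree_compl, Fintype.card_fin] at this
    omega
  have hlast : (cocktailPartyGraph (n + 1)).degree (Fin.last n) = n := by
    simpa using ((cocktailPartyGraph (n + 1)).degree_eq_card_sub_one _).2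
      (isUniversal_last_cocktailPartyGraph hn)
  have hsum := sum_le_sum (s := univ) fun i _ => hdeg (Fin.castSucc i)
  rw [sum_const, card_univ, Fintype.card_fin, smul_eq_mul] at hsum
  rw [← sum_degrees_eq_twice_card_edges, Fin.sum_univ_castSucc, hlast]
  calc n ^ 2 = n * (n - 1) + n := by cases n <;> simp; ring
    _ ≤ _ := by gcongr

theorem stmt4_general (p : ℕ) (hodd : Odd p) :
    bookTuranNumber (p + 2) p = (p + 1) ^ 2 / 2 := by
  have hfree (G : SimpleGraph (Fin (p + 2))) :
      ¬ G.ContainsBook p ↔ G.universalVerts.Subsingleton := by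
    simpa using G.containsBook_card_sub_two_iff.not
  refine bookTuranNumber_eq_of_le (fun G _ hG => ?_) (cocktailPartyGraph (p + 2))
    ((hfree _).2 (universalVerts_cocktailPartyGraph_subsingleton _))
    (Nat.div_le_of_le_mul (sq_le_two_mul_card_edgeFinset_cocktailPartyGraph hodd.add_one))
  have := G.two_mul_card_edgeFinset_le ((hfree G).1 hG)
  rw [Fintype.card_fin, Nat.add_sub_cancel] at this
  rw [Nat.le_div_iff_mul_le two_pos]
  nlinarith

theorem stmt4 (p : ℕ) (hp : 1 ≤ p) (hodd : Odd p) :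
    bookTuranNumber (p + 2) p = (p + 1) ^ 2 / 2 :=
  stmt4_general p hodd
end

section
/- Let p be an even positive integer and let G be a graph of order p+2 not containing B_p with exactly p(p+2)/2 edges. Then G is isomorphic either to K_{p+2} minus a perfect matching, or to the complement of the disjoint union K_1 + ((p−2)/2)K_2 + P_3. -/
open SimpleGraph

/-! The complement `H = Gᶜ` carries the whole argument. Since `G` has `p(p+2)/2` edges on
`p + 2` vertices, the degrees of `H` sum to `p + 2`, the number of vertices. Two isolated
vertices of `H` would span an edge of `G` whose `p` common neighbours are all the other
vertices, i.e. a book `B_p`; so `H` has at most one isolated vertex. If it has none, every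
degree of `H` is `1` and `H` is a perfect matching. If it has one, the remaining degrees sum
to one more than the number of remaining vertices, so one vertex `u` has degree `2` and all
others degree `1`: the neighbours of `u` are leaves, and `H` is `K₁ + ((p-2)/2) K₂ + P₃`. -/

namespace Finset

variable {ι : Type*} {s : Finset ι} {f : ι → ℕ}

theorem eq_one_of_sum_eq_card (h : ∀ i ∈ s, 1 ≤ f i) (hsum : ∑ i ∈ s, f i = #s) :
    ∀ i ∈ s, f i = 1 := fun i hi =>
  ((sum_eq_sum_iff_of_le h).1 (by rw [hsum, card_eq_sum_ones]) i hi).symm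

theorem exists_eq_two_of_sum_eq_card_add_one [DecidableEq ι] (h : ∀ i ∈ s, 1 ≤ f i)
    (hsum : ∑ i ∈ s, f i = #s + 1) : ∃ j ∈ s, f j = 2 ∧ ∀ i ∈ s.erase j, f i = 1 := by
  obtain ⟨j, hj, hj2⟩ : ∃ j ∈ s, 2 ≤ f j := by
    by_contra! hlt
    have : ∑ i ∈ s, f i = ∑ i ∈ s, 1 :=
      sum_congr rfl fun i hi => le_antisymm (Nat.le_of_lt_succ (hlt i hi)) (h i hi)
    rw [this, ← card_eq_sum_ones] at hsum
    omega
  have h1 : ∀ i ∈ s.erase j, 1 ≤ f i := fun i hi => h i (mem_of_mem_erase hi)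
  have hle : #(s.erase j) ≤ ∑ i ∈ s.erase j, f i := by
    simpa using card_nsmul_le_sum _ _ 1 h1
  have hsplit := add_sum_erase s f hj
  have hcard := card_erase_add_one hj
  have hrest : ∑ i ∈ s.erase j, f i = #(s.erase j) := by omega
  exact ⟨j, hj, by omega, eq_one_of_sum_eq_card h1 hrest⟩

end Finset

namespace SimpleGraph

open Finset

variable {V W : Type*}

def Iso.compl {G : SimpleGraph V} {H : SimpleGraph W} (e : G ≃g H) : Gᶜ ≃g Hᶜ :=
  ⟨e.toEquiv, fun {a b} => by simp [e.map_adj_iff (v := a) (w := b)]⟩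

theorem nonempty_iso_compl_of_compl_iso {G : SimpleGraph V} {H : SimpleGraph W}
    (h : Nonempty (Gᶜ ≃g H)) : Nonempty (G ≃g Hᶜ) :=
  h.map fun e => compl_compl G ▸ e.compl

def Embedding.sumElim {α β : Type*} {A : SimpleGraph α} {B : SimpleGraph β} {H : SimpleGraph V}
    (f : A ↪g H) (g : B ↪g H) (hne : ∀ x y, f x ≠ g y) (hadj : ∀ x y, ¬H.Adj (f x) (g y)) :
    A ⊕g B ↪g H where
  toFun := Sum.elim f g
  inj' := f.injective.sumElim g.injective hne
  map_rel_iff' := by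
    rintro (x | x) (y | y)
    · simp
    · simp [hadj]
    · simpa using fun h => hadj y x h.symm
    · simp

noncomputable def Embedding.isoOfCardEq {A : SimpleGraph V} {H : SimpleGraph W} [Finite W]
    (f : A ↪g H) (h : Nat.card V = Nat.card W) : A ≃g H :=
  ⟨Equiv.ofBijective f ((Nat.bijective_iff_injective_and_card f).2 ⟨f.injective, h⟩),
    f.map_rel_iff⟩

def Embedding.pathGraphThree {H : SimpleGraph V} {a u b : V} (hua : H.Adj u a)
    (hub : H.Adj u b) (hab : a ≠ b) (hnab : ¬H.Adj a b) : pathGraph 3 ↪g H where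
  toFun := ![a, u, b]
  inj' := by
    intro i j
    fin_cases i <;> fin_cases j <;> simp [hua.ne, hub.ne, hua.ne.symm, hub.ne.symm, hab, hab.symm]
  map_rel_iff' := by
    intro i j
    change H.Adj (![a, u, b] i) (![a, u, b] j) ↔ _
    have hnba : ¬H.Adj b a := fun h => hnab h.symm
    fin_cases i <;> fin_cases j <;> simp [pathGraph_adj, hua, hub, hua.symm, hub.symm, hnab, hnba]

theorem containsBook_of_isUniversal [Fintype V] {G : SimpleGraph V} {p : ℕ}
    (hV : Fintype.card V = p + 2) {x y : V} (hxy : x ≠ y) (hx : G.IsUniversal x)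
    (hy : G.IsUniversal y) : G.ContainsBook p := by
  refine ⟨x, y, hx hxy, le_of_eq ?_⟩
  have hcommon : G.commonNeighbors x y = {x, y}ᶜ := by
    ext z
    simp only [mem_commonNeighbors, Set.mem_compl_iff, Set.mem_insert_iff,
      Set.mem_singleton_iff, not_or]
    exact ⟨fun h => ⟨(G.ne_of_adj h.1).symm, (G.ne_of_adj h.2).symm⟩,
      fun h => ⟨hx (Ne.symm h.1), hy (Ne.symm h.2)⟩⟩
  rw [hcommon, Set.ncard_compl, Set.ncard_pair hxy, Nat.card_eq_fintype_card, hV,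
    Nat.add_sub_cancel]

theorem sum_degree_compl_add_sum_degree [Fintype V] [DecidableEq V] (G : SimpleGraph V)
    [DecidableRel G.Adj] :
    ∑ v, Gᶜ.degree v + ∑ v, G.degree v = Fintype.card V * (Fintype.card V - 1) := by
  rw [← sum_add_distrib, ← smul_eq_mul, ← card_univ, ← sum_const]
  refine sum_congr rfl fun v _ => ?_
  have := G.degree_lt_card_verts v
  rw [degree_compl, card_univ]
  omega

theorem sum_degree_compl_eq_card [Fintype V] [DecidableEq V] {G : SimpleGraph V}
    [DecidableRel G.Adj] {p : ℕ} (hev : Even p) (hV : Fintype.card V = p + 2)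
    (hsize : G.edgeSet.ncard = p * (p + 2) / 2) : ∑ v, Gᶜ.degree v = Fintype.card V := by
  obtain ⟨k, rfl⟩ := hev
  have hedges : #G.edgeFinset = k * (k + k + 2) := by
    rw [← coe_edgeFinset, Set.ncard_coe_finset] at hsize
    rw [hsize, ← two_mul, mul_assoc, Nat.mul_div_cancel_left _ two_pos]
  have hcompl := G.sum_degree_compl_add_sum_degree
  rw [G.sum_degrees_eq_twice_card_edges, hedges, hV,
    show k + k + 2 - 1 = k + k + 1 by omega] at hcompl
  rw [hV]
  nlinarith

theorem degree_eq_one_of_sum_degree_eq_card [Fintype V] {H : SimpleGraph V}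
    [DecidableRel H.Adj] (hsum : ∑ v, H.degree v = Fintype.card V)
    (h : ∀ v, ¬H.IsIsolated v) (v : V) : H.degree v = 1 :=
  eq_one_of_sum_eq_card (fun v _ => (degree_pos _ _).2 (h v)) hsum v (mem_univ v)

theorem exists_degree_eq_two_of_sum_degree_eq_card [Fintype V] [DecidableEq V]
    {H : SimpleGraph V} [DecidableRel H.Adj] (hsum : ∑ v, H.degree v = Fintype.card V)
    {v₀ : V} (hv₀ : H.IsIsolated v₀) (h : ∀ v, v ≠ v₀ → ¬H.IsIsolated v) :
    ∃ u, H.degree u = 2 ∧ ∀ v, v ≠ v₀ → v ≠ u → H.degree v = 1 := by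
  have hsum' : ∑ v ∈ univ.erase v₀, H.degree v = #(univ.erase v₀) + 1 := by
    rw [← add_sum_erase _ _ (mem_univ v₀), hv₀.degree_eq_zero, zero_add] at hsum
    rw [hsum, card_erase_of_mem (mem_univ v₀), card_univ,
      Nat.sub_add_cancel (Fintype.card_pos_iff.2 ⟨v₀⟩)]
  obtain ⟨u, -, hu, hdeg⟩ := exists_eq_two_of_sum_eq_card_add_one
    (fun v hv => (degree_pos _ _).2 (h v (ne_of_mem_erase hv))) hsum'
  exact ⟨u, hu, fun v hv₀ hvu => hdeg v (by simp [hv₀, hvu])⟩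

theorem nonempty_iso_unionComplete_of_adj_iff [Finite V] {H : SimpleGraph V} {m k : ℕ}
    (f : V → W) (hadj : ∀ u v, H.Adj u v ↔ u ≠ v ∧ f u = f v)
    (hfib : ∀ w, Nat.card {v // f v = w} = k) (hk : 0 < k) (hcard : Nat.card V = m * k) :
    Nonempty (H ≃g unionComplete m k) := by
  have : Finite W := Finite.of_surjective f fun w =>
    have : Nonempty {v // f v = w} := (Nat.card_pos_iff.1 (hfib w ▸ hk)).1
    ⟨_, (Classical.arbitrary {v // f v = w}).2⟩
  let e : V ≃ W × Fin k := (Equiv.sigmaFiberEquiv f).symm.trans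
    ((Equiv.sigmaCongrRight fun w => Finite.equivFinOfCardEq (hfib w)).trans
      (Equiv.sigmaEquivProd W (Fin k)))
  have hW : Nat.card W = m := by
    rw [Nat.card_congr e, Nat.card_prod, Nat.card_eq_fintype_card (α := Fin k),
      Fintype.card_fin] at hcard
    exact Nat.eq_of_mul_eq_mul_right hk hcard
  let e' := e.trans ((Finite.equivFinOfCardEq hW).prodCongr (Equiv.refl _))
  have hfst : ∀ v, (e' v).1 = Finite.equivFinOfCardEq hW (f v) := fun v => rfl
  refine ⟨⟨e', fun {u v} => ?_⟩⟩
  simp only [unionComplete, fromRel_adj, ne_eq, e'.injective.eq_iff, hfst,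
    (Finite.equivFinOfCardEq hW).injective.eq_iff, eq_comm (a := f v), or_self, hadj]

theorem nonempty_iso_unionComplete_two [Finite V] {H : SimpleGraph V} {m : ℕ}
    (h : ∀ v, ∃! w, H.Adj v w) (hcard : Nat.card V = 2 * m) :
    Nonempty (H ≃g unionComplete m 2) := by
  have hM : (⊤ : H.Subgraph).IsMatching := fun v _ => by simpa using h v
  let edgeOf : V → (⊤ : H.Subgraph).edgeSet := fun v => hM.toEdge ⟨v, trivial⟩
  have hadj : ∀ u v, H.Adj u v ↔ u ≠ v ∧ edgeOf u = edgeOf v := by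
    intro u v
    refine ⟨fun huv => ⟨huv.ne, hM.toEdge_eq_toEdge_of_adj (by simpa using huv)⟩, ?_⟩
    rintro ⟨hne, hf⟩
    obtain ⟨w, huw, -⟩ := h u
    have hv : v ∈ (edgeOf u : Sym2 V) := hf ▸ hM.mem_coe_toEdge (v := v) trivial
    rw [show edgeOf u = ⟨s(u, w), by simpa using huw⟩ from
      hM.toEdge_eq_of_adj (by simpa using huw)] at hv
    rcases Sym2.mem_iff.1 hv with rfl | rfl
    exacts [absurd rfl hne, huw]
  refine nonempty_iso_unionComplete_of_adj_iff edgeOf hadj ?_ two_pos (by rw [hcard, mul_comm])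
  intro w
  obtain ⟨⟨u, -⟩, rfl⟩ := Subgraph.IsMatching.toEdge.surjective hM w
  obtain ⟨w, huw, hw⟩ := h u
  have hfib : {v | edgeOf v = edgeOf u} = {u, w} := by
    ext v
    rw [Set.mem_insert_iff, Set.mem_singleton_iff, Set.mem_ofPred_eq, eq_comm]
    refine ⟨fun hf => or_iff_not_imp_left.2 fun hvu => hw v ((hadj u v).2 ⟨Ne.symm hvu, hf⟩), ?_⟩
    rintro (rfl | rfl)
    exacts [rfl, ((hadj _ _).1 huw).2]
  change Nat.card {v | edgeOf v = edgeOf u} = 2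
  rw [hfib, Nat.card_coe_set_eq, Set.ncard_pair huw.ne]

theorem nonempty_induce_iso_unionComplete_two [Finite V] {H : SimpleGraph V} {T : Set V}
    {m : ℕ} (hT : ∀ v ∈ T, ∀ w, H.Adj v w → w ∈ T) (h : ∀ v ∈ T, ∃! w, H.Adj v w)
    (hcard : T.ncard = 2 * m) : Nonempty (H.induce T ≃g unionComplete m 2) := by
  refine nonempty_iso_unionComplete_two (fun ⟨v, hv⟩ => ?_) hcard
  obtain ⟨w, hvw, hw⟩ := h v hv
  exact ⟨⟨w, hT v hv w hvw⟩, hvw, fun w' hw' => Subtype.ext (hw w' hw')⟩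

theorem nonempty_iso_bot_sum_of_isIsolated [Fintype V] {α : Type*} [Fintype α]
    {H : SimpleGraph V} {A : SimpleGraph α} (ι : A ↪g H) {v₀ : V} (hv₀ : H.IsIsolated v₀)
    (hι : ∀ z, ι z ≠ v₀) (hcard : Fintype.card V = 1 + Fintype.card α) :
    Nonempty (H ≃g (⊥ : SimpleGraph (Fin 1)) ⊕g A) := by
  let ι₀ : (⊥ : SimpleGraph (Fin 1)) ↪g H :=
    ⟨⟨fun _ => v₀, Function.injective_of_subsingleton _⟩, by simp⟩
  refine ⟨(ι₀.sumElim ι (fun _ z => (hι z).symm) (fun _ z => hv₀ (ι z))).isoOfCardEq ?_ |>.symm⟩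
  simp [hcard]

theorem nonempty_iso_bot_sum_unionComplete_sum_pathGraph [Fintype V] {H : SimpleGraph V}
    [DecidableRel H.Adj] {m : ℕ} (hcard : Fintype.card V = 2 * m + 4) {v₀ u : V}
    (hv₀ : H.IsIsolated v₀) (hu : H.degree u = 2)
    (hdeg : ∀ v, v ≠ v₀ → v ≠ u → H.degree v = 1) :
    Nonempty (H ≃g (⊥ : SimpleGraph (Fin 1)) ⊕g (unionComplete m 2 ⊕g pathGraph 3)) := by
  classical
  obtain ⟨a, b, hab, hNu⟩ := card_eq_two.1 hu
  have hadj_u : ∀ w, H.Adj u w ↔ w = a ∨ w = b := fun w => by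
    rw [← mem_neighborFinset, hNu, mem_insert, mem_singleton]
  have hua : H.Adj u a := (hadj_u a).2 (.inl rfl)
  have hub : H.Adj u b := (hadj_u b).2 (.inr rfl)
  have hne_v₀ : ∀ {v w}, H.Adj v w → v ≠ v₀ := fun h hv => hv₀ _ (hv ▸ h)
  have hunique : ∀ v, v ≠ v₀ → v ≠ u → ∃! w, H.Adj v w := fun v hv₀ hvu =>
    degree_eq_one_iff_existsUnique_adj.1 (hdeg v hv₀ hvu)
  have hleaf : ∀ {v}, H.Adj u v → ∀ w, H.Adj v w → w = u := fun huv w hvw =>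
    (hunique _ (hne_v₀ huv.symm) huv.ne.symm).unique hvw huv.symm
  have hnab : ¬H.Adj a b := fun h => hub.ne (hleaf hua b h).symm
  let T : Set V := {v₀, u, a, b}ᶜ
  have hT : ∀ v ∈ T, ∀ w, H.Adj v w → w ∈ T := by
    intro v hv w hvw
    simp only [T, Set.mem_compl_iff, Set.mem_insert_iff, Set.mem_singleton_iff, not_or] at hv ⊢
    obtain ⟨-, hvu, hva, hvb⟩ := hv
    refine ⟨hne_v₀ hvw.symm, ?_, fun hwa => hvu ?_, fun hwb => hvu ?_⟩
    · rintro rfl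
      rcases (hadj_u v).1 hvw.symm with rfl | rfl
      exacts [hva rfl, hvb rfl]
    · exact hleaf hua v (hwa ▸ hvw.symm)
    · exact hleaf hub v (hwb ▸ hvw.symm)
  have hTcard : T.ncard = 2 * m := by
    rw [Set.ncard_compl, Nat.card_eq_fintype_card, hcard,
      Set.ncard_insert_of_notMem (by simp [(hne_v₀ hua).symm, (hne_v₀ hua.symm).symm,
        (hne_v₀ hub.symm).symm]),
      Set.ncard_insert_of_notMem (by simp [hua.ne, hub.ne]), Set.ncard_pair hab]
    omega
  obtain ⟨eT⟩ := nonempty_induce_iso_unionComplete_two hT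
    (fun v hv => hunique v (fun h => hv (.inl h)) (fun h => hv (.inr (.inl h)))) hTcard
  let P := Embedding.pathGraphThree hua hub hab hnab
  have hP : ∀ y, P y ∉ T := by
    intro y
    change ![a, u, b] y ∉ T
    fin_cases y <;> simp [T]
  let ι₁ : unionComplete m 2 ⊕g pathGraph 3 ↪g H :=
    ((Embedding.induce T).comp eT.symm.toEmbedding).sumElim
      P (fun x y h => hP y (by rw [← h]; exact (eT.symm x).2))
      (fun x y h => hP y (hT _ (eT.symm x).2 _ h))
  have hι₁ : ∀ z, ι₁ z ≠ v₀ := by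
    rintro (x | y)
    · exact fun h => (eT.symm x).2 (.inl h)
    · fin_cases y
      exacts [hne_v₀ hua.symm, hne_v₀ hua, hne_v₀ hub.symm]
  exact nonempty_iso_bot_sum_of_isIsolated ι₁ hv₀ hι₁ (by simp [hcard]; ring)

end SimpleGraph

open SimpleGraph in
theorem stmt7 (p : ℕ) (hp : 1 ≤ p) (hev : Even p) {V : Type*} [Fintype V]
    (hV : Fintype.card V = p + 2) (G : SimpleGraph V) (hfree : ¬ G.ContainsBook p)
    (hsize : G.edgeSet.ncard = p * (p + 2) / 2) :
    Nonempty (G ≃g (unionComplete ((p + 2) / 2) 2)ᶜ) ∨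
      Nonempty (G ≃g ((⊥ : SimpleGraph (Fin 1)) ⊕g
        (unionComplete ((p - 2) / 2) 2 ⊕g SimpleGraph.pathGraph 3))ᶜ) := by
  classical
  have hsum := sum_degree_compl_eq_card hev hV hsize
  have hbook : ∀ x y, x ≠ y → Gᶜ.IsIsolated x → ¬Gᶜ.IsIsolated y := fun x y hxy hx hy =>
    hfree (containsBook_of_isUniversal hV hxy (isIsolated_compl_iff_isUniversal.1 hx)
      (isIsolated_compl_iff_isUniversal.1 hy))
  obtain ⟨k, rfl⟩ := hev
  by_cases hiso : ∃ v₀, Gᶜ.IsIsolated v₀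
  · right
    obtain ⟨v₀, hv₀⟩ := hiso
    obtain ⟨u, hu, hdeg⟩ :=
      exists_degree_eq_two_of_sum_degree_eq_card hsum hv₀ fun v hv => hbook v₀ v hv.symm hv₀
    exact nonempty_iso_compl_of_compl_iso
      (nonempty_iso_bot_sum_unionComplete_sum_pathGraph (by omega) hv₀ hu hdeg)
  · left
    simp only [not_exists] at hiso
    refine nonempty_iso_compl_of_compl_iso (nonempty_iso_unionComplete_two (fun v => ?_)
      (by rw [Nat.card_eq_fintype_card]; omega))
    exact degree_eq_one_iff_existsUnique_adj.1 (degree_eq_one_of_sum_degree_eq_card hsum hiso v)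
end
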